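/- (Lemma 1, part 3) Let C be a binary linear code with odd minimum distance d. For every two distinct codewords c_2, c_2' of weight d+1 in C, the set LH^-(c_2) ∩ LH^-(c_2') has at most one element, where LH^-(c) denotes the set of larger halves of c of weight w(c)/2. -/
import Mathlib


/-- Support of a binary vector: the set of nonzero coordinates. -/
def supp {n : ℕ} (x : Fin n → ZMod 2) : Finset (Fin n) :=
  Finset.univ.filter (fun i => x i ≠ 0)

/-- Hamming weight. -/
def wt {n : ℕ} (x : Fin n → ZMod 2) : ℕ := (supp x).card

/-- Numerical value v(x) = Σ_{i=1}^n x_i 2^(n-i) (0-based: exponent n-1-i). -/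
def nval {n : ℕ} (x : Fin n → ZMod 2) : ℕ :=
  ∑ i : Fin n, (x i).val * 2 ^ (n - 1 - (i : ℕ))

/-- The total order ⪯ : first by weight, ties broken by numerical value. -/
def ple {n : ℕ} (x y : Fin n → ZMod 2) : Prop :=
  wt x < wt y ∨ (wt x = wt y ∧ nval x ≤ nval y)

/-- The strict version ≺ of ⪯. -/
def plt {n : ℕ} (x y : Fin n → ZMod 2) : Prop := ple x y ∧ x ≠ y

/-- Covering order: x ⊆ y iff S(x) ⊆ S(y). -/
def covers {n : ℕ} (x y : Fin n → ZMod 2) : Prop := supp x ⊆ supp y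

/-- v is the coset leader of its coset of C, i.e. the ⪯-minimum element
(u ranges over the coset of v: u + v ∈ C). -/
def IsCosetLeader {n : ℕ} (C : Submodule (ZMod 2) (Fin n → ZMod 2))
    (v : Fin n → ZMod 2) : Prop :=
  ∀ u, u + v ∈ C → ple v u

/-- E⁰(C): the set of correctable errors (coset leaders). -/
def E0 {n : ℕ} (C : Submodule (ZMod 2) (Fin n → ZMod 2)) : Set (Fin n → ZMod 2) :=
  {v | IsCosetLeader C v}

/-- E¹(C): the set of uncorrectable errors. -/
def E1 {n : ℕ} (C : Submodule (ZMod 2) (Fin n → ZMod 2)) : Set (Fin n → ZMod 2) :=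
  {v | ¬ IsCosetLeader C v}

/-- M¹(C): the ⊆-minimal elements of E¹(C). -/
def M1 {n : ℕ} (C : Submodule (ZMod 2) (Fin n → ZMod 2)) : Set (Fin n → ZMod 2) :=
  {v ∈ E1 C | ∀ u ∈ E1 C, covers u v → u = v}

/-- v is a larger half of c: v is ⊆-minimal among vectors u with u + c ≺ u. -/
def IsLH {n : ℕ} (c v : Fin n → ZMod 2) : Prop :=
  plt (v + c) v ∧ ∀ u, plt (u + c) u → covers u v → u = v

/-- LH(c): the set of larger halves of c. -/
def LH {n : ℕ} (c : Fin n → ZMod 2) : Set (Fin n → ZMod 2) := {v | IsLH c v}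

/-- LH(U) = ∪_{c ∈ U} LH(c). -/
def LHset {n : ℕ} (U : Set (Fin n → ZMod 2)) : Set (Fin n → ZMod 2) :=
  ⋃ c ∈ U, LH c

/-- LH⁻(c): larger halves of c of weight w(c)/2 (for even-weight c). -/
def LHm {n : ℕ} (c : Fin n → ZMod 2) : Set (Fin n → ZMod 2) :=
  {v ∈ LH c | 2 * wt v = wt c}

/-- A_i(U): elements of U of weight i. -/
def Aw {n : ℕ} (U : Set (Fin n → ZMod 2)) (i : ℕ) : Set (Fin n → ZMod 2) :=
  {v ∈ U | wt v = i}

/-- C has minimum distance d. -/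
def HasMinDist {n : ℕ} (C : Submodule (ZMod 2) (Fin n → ZMod 2)) (d : ℕ) : Prop :=
  (∃ c ∈ C, c ≠ 0 ∧ wt c = d) ∧ ∀ c ∈ C, c ≠ 0 → d ≤ wt c

/-- T is a trial set for C. -/
def IsTrialSet {n : ℕ} (C : Submodule (ZMod 2) (Fin n → ZMod 2))
    (T : Set (Fin n → ZMod 2)) : Prop :=
  T ⊆ (C : Set (Fin n → ZMod 2)) \ {0} ∧ M1 C ⊆ LHset T

/-- l(x) = min S(x), the leftmost nonzero coordinate (⊤ if x = 0). -/
def lm {n : ℕ} (x : Fin n → ZMod 2) : WithTop (Fin n) := (supp x).min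

/-- The coordinatewise "and" of two vectors: support is S(x) ∩ S(y). -/
def vand {n : ℕ} (x y : Fin n → ZMod 2) : Fin n → ZMod 2 := fun i => x i * y i

open scoped symmDiff

lemma zmod2_cases : ∀ a : ZMod 2, a = 0 ∨ a = 1 := by decide

lemma eq_of_supp_eq {n : ℕ} {x y : Fin n → ZMod 2} (h : supp x = supp y) : x = y := by
  funext i
  have hx := zmod2_cases (x i)
  have hy := zmod2_cases (y i)
  have hm : (i ∈ supp x) ↔ (i ∈ supp y) := by rw [h]
  simp only [supp, Finset.mem_filter, Finset.mem_univ, true_and] at hm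
  rcases hx with hx | hx <;> rcases hy with hy | hy <;> simp [hx, hy] at hm ⊢

lemma mem_supp {n : ℕ} {x : Fin n → ZMod 2} {i : Fin n} : i ∈ supp x ↔ x i ≠ 0 := by
  simp [supp]

lemma supp_add {n : ℕ} (x y : Fin n → ZMod 2) : supp (x + y) = supp x ∆ supp y := by
  ext i
  rw [Finset.mem_symmDiff]
  simp only [mem_supp, Pi.add_apply]
  rcases zmod2_cases (x i) with hx | hx <;> rcases zmod2_cases (y i) with hy | hy <;>
    simp [hx, hy] <;> decide

lemma supp_vand {n : ℕ} (x y : Fin n → ZMod 2) : supp (vand x y) = supp x ∩ supp y := by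
  ext i
  simp only [mem_supp, Finset.mem_inter, vand]
  rcases zmod2_cases (x i) with hx | hx <;> rcases zmod2_cases (y i) with hy | hy <;>
    simp [hx, hy]

lemma card_symmDiff_aux {n : ℕ} (s t : Finset (Fin n)) :
    (s ∆ t).card + 2 * (s ∩ t).card = s.card + t.card := by
  have h1 : s ∆ t = (s \ t) ∪ (t \ s) := by
    ext i; simp [Finset.mem_symmDiff, Finset.mem_union, Finset.mem_sdiff]
  have hd : Disjoint (s \ t) (t \ s) := by
    rw [Finset.disjoint_left]; intro a ha hb
    simp [Finset.mem_sdiff] at ha hb; tauto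
  have h2 : (s ∆ t).card = (s \ t).card + (t \ s).card := by
    rw [h1, Finset.card_union_of_disjoint hd]
  have h3 := Finset.card_sdiff_add_card_inter s t
  have h4 := Finset.card_sdiff_add_card_inter t s
  rw [Finset.inter_comm] at h4
  omega

lemma card_symmDiff_eq {n : ℕ} (s t : Finset (Fin n)) :
    (s ∆ t).card = (s \ t).card + (t \ s).card := by
  have h1 : s ∆ t = (s \ t) ∪ (t \ s) := by
    ext i; simp [Finset.mem_symmDiff, Finset.mem_union, Finset.mem_sdiff]
  have hd : Disjoint (s \ t) (t \ s) := by
    rw [Finset.disjoint_left]; intro a ha hb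
    simp [Finset.mem_sdiff] at ha hb; tauto
  rw [h1, Finset.card_union_of_disjoint hd]

lemma lh_covers {n : ℕ} {c v : Fin n → ZMod 2} (h : IsLH c v) : supp v ⊆ supp c := by
  obtain ⟨hplt, hmin⟩ := h
  set u := vand v c with hu
  have hsu : supp u = supp v ∩ supp c := supp_vand v c
  have hnv : nval (v + c) + nval u = nval (u + c) + nval v := by
    unfold nval
    rw [← Finset.sum_add_distrib, ← Finset.sum_add_distrib]
    apply Finset.sum_congr rfl
    intro i _
    rcases zmod2_cases (c i) with hc | hc <;> simp [hu, vand, hc] <;> try ring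
  have hw1 : wt v = wt u + (supp v \ supp c).card := by
    unfold wt
    rw [hsu, ← Finset.card_inter_add_card_sdiff (supp v) (supp c)]
  have hsuc : supp (u + c) = supp c \ supp v := by
    rw [supp_add, hsu]
    ext i
    simp only [Finset.mem_symmDiff, Finset.mem_inter, Finset.mem_sdiff]; tauto
  have hw2 : wt (v + c) = (supp v \ supp c).card + wt (u + c) := by
    unfold wt
    rw [supp_add, hsuc, card_symmDiff_eq]
  have hc0 : c ≠ 0 := by
    intro hc; apply hplt.2; rw [hc, add_zero]
  have hplt' : plt (u + c) u := by
    refine ⟨?_, ?_⟩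
    · rcases hplt.1 with hlt | ⟨heq, hle⟩
      · left; omega
      · right; constructor <;> omega
    · intro habs
      exact absurd (add_eq_left.mp habs) hc0
  have hcov : covers u v := by
    unfold covers; rw [hsu]; exact Finset.inter_subset_left
  have huv := hmin u hplt' hcov
  intro i hi
  have : i ∈ supp u := by rw [huv]; exact hi
  rw [hsu] at this
  exact (Finset.mem_inter.mp this).2

lemma lhm_supp {n : ℕ} (C : Submodule (ZMod 2) (Fin n → ZMod 2)) (d : ℕ)
    (hd : HasMinDist C d) (hodd : Odd d)
    (c2 c2' : Fin n → ZMod 2) (h2 : c2 ∈ C) (h2' : c2' ∈ C)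
    (hw2 : wt c2 = d + 1) (hw2' : wt c2' = d + 1) (hne : c2 ≠ c2')
    (v : Fin n → ZMod 2) (hv : v ∈ LHm c2 ∩ LHm c2') :
    supp v = supp c2 ∩ supp c2' := by
  obtain ⟨⟨hL, hW⟩, hL', hW'⟩ := hv
  have hsub : supp v ⊆ supp c2 ∩ supp c2' :=
    Finset.subset_inter (lh_covers hL) (lh_covers hL')
  have hc : c2 + c2' ∈ C := add_mem h2 h2'
  have hc0 : c2 + c2' ≠ 0 := by
    intro h
    apply hne
    funext i
    have hcoord : c2 i + c2' i = 0 := congrFun h i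
    rcases zmod2_cases (c2 i) with h1 | h1 <;> rcases zmod2_cases (c2' i) with h1' | h1' <;>
      simp [h1, h1'] at hcoord ⊢
  have hdle : d ≤ wt (c2 + c2') := hd.2 _ hc hc0
  have hcard : wt (c2 + c2') + 2 * (supp c2 ∩ supp c2').card = wt c2 + wt c2' := by
    unfold wt
    rw [supp_add]
    exact card_symmDiff_aux _ _
  obtain ⟨k, hk⟩ := hodd
  have hmle : (supp c2 ∩ supp c2').card ≤ (supp v).card := by
    have h1 : wt v = (supp v).card := rfl
    omega
  exact Finset.eq_of_subset_of_card_le hsub hmle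

/-- Lemma 1, part 3: |LH⁻(c₂) ∩ LH⁻(c₂')| ≤ 1 for distinct
codewords of weight d+1, d odd. -/
theorem stmt8 {n : ℕ} (C : Submodule (ZMod 2) (Fin n → ZMod 2)) (d : ℕ)
    (hd : HasMinDist C d) (hodd : Odd d)
    (c2 c2' : Fin n → ZMod 2) (h2 : c2 ∈ C) (h2' : c2' ∈ C)
    (hw2 : wt c2 = d + 1) (hw2' : wt c2' = d + 1) (hne : c2 ≠ c2') :
    (LHm c2 ∩ LHm c2').Subsingleton := by
  intro v hv v' hv'
  exact eq_of_supp_eq ((lhm_supp C d hd hodd c2 c2' h2 h2' hw2 hw2' hne v hv).trans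
    (lhm_supp C d hd hodd c2 c2' h2 h2' hw2 hw2' hne v' hv').symm)
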